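/- arXiv:2203.02465 — 3 statements merged into one kernel-verified Lean document; each statement's English description precedes it below -/
import Mathlib

section
/- If a polynomial u of degree at most p-1 has zero integral over each of p pairwise disjoint nonempty open subintervals of [-1,1], then u is identically zero. -/
/-- If a polynomial `u` of degree at most `p-1` has zero integral over each of `p`
pairwise disjoint nonempty open subintervals of `[-1,1]`, then `u = 0`. -/
theorem histopolation_zero
    (p : ℕ) (hp : 1 ≤ p)
    (a b : Fin p → ℝ)
    (hab : ∀ i, a i < b i)
    (ha : ∀ i, -1 ≤ a i) (hb : ∀ i, b i ≤ 1)
    (hdisj : ∀ i j, i ≠ j → Disjoint (Set.Ioo (a i) (b i)) (Set.Ioo (a j) (b j)))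
    (u : Polynomial ℝ)
    (hdeg : u.degree ≤ (p - 1 : ℕ))
    (hint : ∀ i, ∫ x in (a i)..(b i), u.eval x = 0) :
    u = 0 := by
  have hcont : Continuous (fun x => u.eval x) := u.continuous
  set F : ℝ → ℝ := fun x => ∫ t in (0:ℝ)..x, u.eval t with hF
  have hFderiv : ∀ x : ℝ, HasDerivAt F (u.eval x) x := fun x =>
    (hcont.integral_hasStrictDerivAt 0 x).hasDerivAt
  have hFcont : Continuous F := continuous_iff_continuousAt.mpr fun x => (hFderiv x).continuousAt
  -- F (a i) = F (b i)
  have hFeq : ∀ i, F (a i) = F (b i) := by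
    intro i
    have := intervalIntegral.integral_add_adjacent_intervals
      (μ := MeasureTheory.volume) (f := fun x => u.eval x) (a := (0:ℝ)) (b := a i) (c := b i)
      (hcont.intervalIntegrable _ _) (hcont.intervalIntegrable _ _)
    have h2 := hint i
    simp only [hF]
    rw [← this, h2, add_zero]
  -- Rolle gives a root in each interval
  have hroot : ∀ i, ∃ c ∈ Set.Ioo (a i) (b i), u.eval c = 0 := by
    intro i
    obtain ⟨c, hc, hc0⟩ := exists_deriv_eq_zero (hab i) (hFcont.continuousOn) (hFeq i)
    refine ⟨c, hc, ?_⟩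
    rw [← (hFderiv c).deriv]
    exact hc0
  choose c hc hc0 using hroot
  have hcinj : Function.Injective c := by
    intro i j hij
    by_contra hne
    exact Set.disjoint_left.mp (hdisj i j hne) (hc i) (hij ▸ hc j)
  apply Polynomial.eq_zero_of_natDegree_lt_card_of_eval_eq_zero u hcinj hc0
  have : u.natDegree ≤ p - 1 := Polynomial.natDegree_le_iff_degree_le.mpr hdeg
  simpa using lt_of_le_of_lt this (Nat.sub_lt hp one_pos)
end

section
/- The histopolation operator is a linear bijection: given p pairwise disjoint nonempty open subintervals of [-1,1] with lengths h_i, for every vector of prescribed averages (û_1, ..., û_p) there exists a unique polynomial u of degree at most p-1 such that (1/h_i) ∫_{I_i} u(x) dx = û_i for all i. -/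
open Polynomial intervalIntegral Set

/-- If a polynomial has zero integral over an interval, it has a root inside. -/
lemma histo_exists_root_of_integral_zero (u : Polynomial ℝ) {x y : ℝ} (hxy : x < y)
    (h : ∫ t in x..y, u.eval t = 0) : ∃ c ∈ Set.Ioo x y, u.eval c = 0 := by
  set F : ℝ → ℝ := fun z => ∫ t in x..z, u.eval t with hF
  have hFc : Continuous F :=
    intervalIntegral.continuous_primitive
      (fun a b => u.continuous.intervalIntegrable a b) x
  have hxy0 : F x = F y := by
    simp [hF, intervalIntegral.integral_same, h]
  obtain ⟨c, hc, hc0⟩ := exists_deriv_eq_zero hxy hFc.continuousOn hxy0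
  refine ⟨c, hc, ?_⟩
  have : deriv F c = u.eval c := Continuous.deriv_integral _ u.continuous x c
  rw [this] at hc0
  exact hc0

/-- The (unnormalized) histopolation linear map on polynomials of degree < p. -/
noncomputable def histoMap (p : ℕ) (a b : Fin p → ℝ) :
    Polynomial.degreeLT ℝ p →ₗ[ℝ] (Fin p → ℝ) where
  toFun u := fun i => ∫ x in (a i)..(b i), (u : Polynomial ℝ).eval x
  map_add' u v := by
    funext i
    simp only [Submodule.coe_add, eval_add]
    exact intervalIntegral.integral_add
      ((u : Polynomial ℝ).continuous.intervalIntegrable _ _)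
      ((v : Polynomial ℝ).continuous.intervalIntegrable _ _)
  map_smul' c u := by
    funext i
    simp only [SetLike.val_smul, smul_eq_mul, RingHom.id_apply, Pi.smul_apply]
    simp_rw [Polynomial.eval_smul, smul_eq_mul, intervalIntegral.integral_const_mul]

/-- The histopolation operator is a bijection: for any prescribed averages there is a
unique polynomial of degree at most `p-1` with those averages over the `p` disjoint
subintervals. -/
theorem histopolation_existsUnique
    (p : ℕ) (hp : 1 ≤ p)
    (a b : Fin p → ℝ)
    (hab : ∀ i, a i < b i)
    (ha : ∀ i, -1 ≤ a i) (hb : ∀ i, b i ≤ 1)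
    (hdisj : ∀ i j, i ≠ j → Disjoint (Set.Ioo (a i) (b i)) (Set.Ioo (a j) (b j)))
    (uhat : Fin p → ℝ) :
    ∃! u : Polynomial ℝ, u.degree ≤ (p - 1 : ℕ) ∧
      ∀ i, (1 / (b i - a i)) * ∫ x in (a i)..(b i), u.eval x = uhat i := by
  classical
  have hne : ∀ i, b i - a i ≠ 0 := fun i => sub_ne_zero.mpr (hab i).ne'
  set L := histoMap p a b with hL
  -- injectivity
  have hinj : Function.Injective L := by
    rw [← LinearMap.ker_eq_bot, LinearMap.ker_eq_bot']
    intro u hu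
    have hint : ∀ i, ∫ x in (a i)..(b i), (u : Polynomial ℝ).eval x = 0 := by
      intro i; exact congrFun hu i
    choose c hc hc0 using fun i =>
      histo_exists_root_of_integral_zero (u : Polynomial ℝ) (hab i) (hint i)
    have hcinj : Function.Injective c := by
      intro i j hij
      by_contra hne'
      exact (hdisj i j hne').ne_of_mem (hc i) (hc j) hij
    have hdeg : (u : Polynomial ℝ).degree < (p : ℕ) := Polynomial.mem_degreeLT.mp u.2
    have huz : (u : Polynomial ℝ) = 0 := by
      by_cases h0 : (u : Polynomial ℝ) = 0
      · exact h0
      · refine Polynomial.eq_zero_of_natDegree_lt_card_of_eval_eq_zero _ hcinj hc0 ?_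
        rw [Fintype.card_fin]
        exact (Polynomial.natDegree_lt_iff_degree_lt h0).mpr hdeg
    exact Subtype.ext huz
  -- surjectivity via equal finite dimensions
  have hsurj : Function.Surjective L := by
    set e := Polynomial.degreeLTEquiv ℝ p
    have : Function.Injective (L ∘ₗ (e.symm : (Fin p → ℝ) →ₗ[ℝ] Polynomial.degreeLT ℝ p)) :=
      hinj.comp e.symm.injective
    have hs : Function.Surjective
        (L ∘ₗ (e.symm : (Fin p → ℝ) →ₗ[ℝ] Polynomial.degreeLT ℝ p)) :=
      LinearMap.injective_iff_surjective.mp this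
    intro v
    obtain ⟨w, hw⟩ := hs v
    exact ⟨e.symm w, hw⟩
  obtain ⟨u, hu⟩ := hsurj (fun i => (b i - a i) * uhat i)
  have hudeg : (u : Polynomial ℝ).degree ≤ ((p - 1 : ℕ) : WithBot ℕ) := by
    have hdeg : (u : Polynomial ℝ).degree < (p : ℕ) := Polynomial.mem_degreeLT.mp u.2
    by_cases h0 : (u : Polynomial ℝ) = 0
    · rw [h0]; simp
    · have hn := (Polynomial.natDegree_lt_iff_degree_lt h0).mpr hdeg
      calc (u : Polynomial ℝ).degree ≤ ((u : Polynomial ℝ).natDegree : WithBot ℕ) :=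
            Polynomial.degree_le_natDegree
        _ ≤ ((p - 1 : ℕ) : WithBot ℕ) := WithBot.coe_le_coe.mpr (Nat.le_pred_of_lt hn)
  refine ⟨(u : Polynomial ℝ), ⟨hudeg, ?_⟩, ?_⟩
  · intro i
    have : (L u) i = (b i - a i) * uhat i := congrFun hu i
    rw [hL] at this
    simp only [histoMap, LinearMap.coe_mk, AddHom.coe_mk] at this
    rw [this, one_div, inv_mul_eq_div, mul_div_cancel_left₀ _ (hne i)]
  · rintro v ⟨hvdeg, hv⟩
    have hvmem : v ∈ Polynomial.degreeLT ℝ p := by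
      rw [Polynomial.mem_degreeLT]
      calc v.degree ≤ ((p - 1 : ℕ) : WithBot ℕ) := hvdeg
        _ < (p : ℕ) := by exact_mod_cast Nat.sub_lt hp one_pos
    have hvint : ∀ i, ∫ x in (a i)..(b i), v.eval x = (b i - a i) * uhat i := by
      intro i
      have h1 : (b i - a i) * ((1 / (b i - a i)) * ∫ x in (a i)..(b i), v.eval x)
          = (b i - a i) * uhat i := by rw [hv i]
      rwa [← mul_assoc, mul_one_div_cancel (hne i), one_mul] at h1
    have hdiff : L (⟨v, hvmem⟩ - u) = 0 := by
      rw [map_sub]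
      funext i
      have hu' : (L u) i = (b i - a i) * uhat i := congrFun hu i
      simp only [Pi.sub_apply, Pi.zero_apply, hL, histoMap, LinearMap.coe_mk, AddHom.coe_mk]
        at hu' ⊢
      rw [hvint i, hu']
      ring
    have : (⟨v, hvmem⟩ : Polynomial.degreeLT ℝ p) - u = 0 := by
      apply hinj
      rw [hdiff, map_zero]
    have h2 : (⟨v, hvmem⟩ : Polynomial.degreeLT ℝ p) = u := by
      rwa [sub_eq_zero] at this
    exact congrArg Subtype.val h2
end

section
/- Given constants 0 < c ≤ C with c‖I_h u‖ ≤ ‖I_p u‖ ≤ C‖I_h u‖ for all u, the tensor product of the interpolation equivalence with itself d times yields c^d ‖(I_h ⊗ ... ⊗ I_h) u‖ ≤ ‖(I_p ⊗ ... ⊗ I_p) u‖ ≤ C^d ‖(I_h ⊗ ... ⊗ I_h) u‖ for all u in the d-fold tensor product space. -/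
open scoped BigOperators

/-- The Euclidean norm of a finitely indexed real vector. -/
noncomputable def euclNorm {ι : Type*} [Fintype ι] (v : ι → ℝ) : ℝ :=
  Real.sqrt (∑ i, v i ^ 2)

/-- The `d`-fold Kronecker (tensor) power of a matrix, acting on the `d`-fold
tensor product space `(ℝ^n)^{⊗ d} ≅ ℝ^{n^d}`, indexed by functions `Fin d → Fin n`. -/
noncomputable def kronPow (n d : ℕ) (A : Matrix (Fin n) (Fin n) ℝ) :
    Matrix (Fin d → Fin n) (Fin d → Fin n) ℝ :=
  fun j k => ∏ t, A (j t) (k t)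

lemma kronPow_mul (n d : ℕ) (X Y : Matrix (Fin n) (Fin n) ℝ) :
    kronPow n d (X * Y) = kronPow n d X * kronPow n d Y := by
  ext j k
  simp only [kronPow, Matrix.mul_apply]
  rw [Finset.prod_univ_sum]
  rw [Fintype.piFinset_univ]
  exact Finset.sum_congr rfl fun p _ => Finset.prod_mul_distrib

lemma kronPow_one (n d : ℕ) : kronPow n d (1 : Matrix (Fin n) (Fin n) ℝ) = 1 := by
  ext j k
  simp only [kronPow, Matrix.one_apply]
  by_cases h : j = k
  · subst h; simp
  · rw [if_neg h]
    obtain ⟨t, ht⟩ := Function.ne_iff.mp h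
    exact Finset.prod_eq_zero (Finset.mem_univ t) (by simp [ht])

lemma sum_cons_split (n d : ℕ) (f : (Fin (d+1) → Fin n) → ℝ) :
    ∑ j, f j = ∑ i : Fin n, ∑ j' : Fin d → Fin n, f (Fin.cons i j') := by
  rw [← (Fin.consEquiv (fun _ => Fin n)).sum_comp f, Fintype.sum_prod_type]
  rfl

lemma kron_mulVec_cons (n d : ℕ) (M : Matrix (Fin n) (Fin n) ℝ)
    (w : (Fin (d+1) → Fin n) → ℝ) (i : Fin n) (j' : Fin d → Fin n) :
    (kronPow n (d+1) M).mulVec w (Fin.cons i j') =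
      ∑ a : Fin n, M i a *
        ((kronPow n d M).mulVec (fun k' => w (Fin.cons a k')) j') := by
  simp only [Matrix.mulVec, dotProduct, kronPow]
  rw [sum_cons_split n d]
  refine Finset.sum_congr rfl fun a _ => ?_
  rw [Finset.mul_sum]
  refine Finset.sum_congr rfl fun k' _ => ?_
  rw [Fin.prod_univ_succ]
  simp [Fin.cons_zero, Fin.cons_succ, mul_assoc]

lemma sq_bound (n : ℕ) (M : Matrix (Fin n) (Fin n) ℝ) (K2 : ℝ) (hK : 0 ≤ K2)
    (h : ∀ u : Fin n → ℝ, ∑ i, (M.mulVec u i)^2 ≤ K2 * ∑ i, (u i)^2) :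
    ∀ (d : ℕ) (w : (Fin d → Fin n) → ℝ),
      ∑ j, ((kronPow n d M).mulVec w j)^2 ≤ K2^d * ∑ j, (w j)^2 := by
  intro d
  induction d with
  | zero =>
    intro w
    have hw : ∀ j : Fin 0 → Fin n, (kronPow n 0 M).mulVec w j = w j := by
      intro j
      simp only [Matrix.mulVec, dotProduct, kronPow, Finset.univ_eq_empty,
        Finset.prod_empty, one_mul]
      rw [Finset.sum_eq_single_of_mem j (Finset.mem_univ j)]
      intro b _ hb
      exact absurd (Subsingleton.elim b j) hb
    simp only [hw, pow_zero, one_mul, le_refl]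
  | succ d ih =>
    intro w
    set V : Fin n → (Fin d → Fin n) → ℝ :=
      fun a => (kronPow n d M).mulVec (fun k' => w (Fin.cons a k')) with hV
    calc ∑ j, ((kronPow n (d+1) M).mulVec w j)^2
        = ∑ i : Fin n, ∑ j' : Fin d → Fin n,
            ((kronPow n (d+1) M).mulVec w (Fin.cons i j'))^2 := sum_cons_split n d _
      _ = ∑ j' : Fin d → Fin n, ∑ i : Fin n,
            (M.mulVec (fun a => V a j') i)^2 := by
          rw [Finset.sum_comm]
          refine Finset.sum_congr rfl fun j' _ => Finset.sum_congr rfl fun i _ => ?_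
          rw [kron_mulVec_cons]
          rfl
      _ ≤ ∑ j' : Fin d → Fin n, K2 * ∑ a, (V a j')^2 :=
          Finset.sum_le_sum fun j' _ => h _
      _ = K2 * ∑ a, ∑ j', (V a j')^2 := by
          rw [← Finset.mul_sum, Finset.sum_comm]
      _ ≤ K2 * ∑ a, K2^d * ∑ j', (w (Fin.cons a j'))^2 := by
          refine mul_le_mul_of_nonneg_left (Finset.sum_le_sum fun a _ => ?_) hK
          exact ih _
      _ = K2^(d+1) * ∑ j, (w j)^2 := by
          rw [← Finset.mul_sum, sum_cons_split n d (fun j => (w j)^2)]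
          ring

lemma norm_bound (n d : ℕ) (M : Matrix (Fin n) (Fin n) ℝ) (K : ℝ) (hK : 0 ≤ K)
    (h : ∀ u : Fin n → ℝ, euclNorm (M.mulVec u) ≤ K * euclNorm u) :
    ∀ w : (Fin d → Fin n) → ℝ,
      euclNorm ((kronPow n d M).mulVec w) ≤ K ^ d * euclNorm w := by
  have hsq : ∀ u : Fin n → ℝ, ∑ i, (M.mulVec u i)^2 ≤ K^2 * ∑ i, (u i)^2 := by
    intro u
    have h1 : euclNorm (M.mulVec u) ^ 2 ≤ (K * euclNorm u) ^ 2 :=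
      pow_le_pow_left₀ (Real.sqrt_nonneg _) (h u) 2
    have e1 : euclNorm (M.mulVec u) ^ 2 = ∑ i, (M.mulVec u i)^2 := by
      rw [euclNorm, Real.sq_sqrt (Finset.sum_nonneg fun i _ => sq_nonneg _)]
    have e2 : euclNorm u ^ 2 = ∑ i, (u i)^2 := by
      rw [euclNorm, Real.sq_sqrt (Finset.sum_nonneg fun i _ => sq_nonneg _)]
    calc ∑ i, (M.mulVec u i)^2 = euclNorm (M.mulVec u) ^ 2 := e1.symm
      _ ≤ (K * euclNorm u)^2 := h1
      _ = K^2 * ∑ i, (u i)^2 := by rw [mul_pow, e2]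
  intro w
  have key := sq_bound n M (K^2) (sq_nonneg K) hsq d w
  have : euclNorm ((kronPow n d M).mulVec w) ≤ Real.sqrt ((K^2)^d * ∑ j, (w j)^2) :=
    Real.sqrt_le_sqrt key
  calc euclNorm ((kronPow n d M).mulVec w)
      ≤ Real.sqrt ((K^2)^d * ∑ j, (w j)^2) := this
    _ = K ^ d * euclNorm w := by
        rw [show (K^2)^d = (K^d)^2 by ring, Real.sqrt_mul (sq_nonneg _),
          Real.sqrt_sq (pow_nonneg hK d)]
        rfl


/-- If `c ‖B u‖ ≤ ‖A u‖ ≤ C ‖B u‖` for all `u`, then the `d`-fold tensor powers satisfy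
`c^d ‖B^{⊗d} u‖ ≤ ‖A^{⊗d} u‖ ≤ C^d ‖B^{⊗d} u‖` for all `u` in the tensor product space. -/
theorem tensor_power_norm_equiv
    (n d : ℕ) (A B : Matrix (Fin n) (Fin n) ℝ)
    (hA : IsUnit A) (hB : IsUnit B)
    (c C : ℝ) (hc : 0 < c) (hcC : c ≤ C)
    (hequiv : ∀ u : Fin n → ℝ,
      c * euclNorm (B.mulVec u) ≤ euclNorm (A.mulVec u) ∧
      euclNorm (A.mulVec u) ≤ C * euclNorm (B.mulVec u)) :
    ∀ u : (Fin d → Fin n) → ℝ,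
      c ^ d * euclNorm ((kronPow n d B).mulVec u) ≤ euclNorm ((kronPow n d A).mulVec u) ∧
      euclNorm ((kronPow n d A).mulVec u) ≤ C ^ d * euclNorm ((kronPow n d B).mulVec u) := by
  intro u
  obtain ⟨A', hAA', hA'A⟩ : ∃ A' : Matrix (Fin n) (Fin n) ℝ, A * A' = 1 ∧ A' * A = 1 := by
    exact ⟨↑hA.unit⁻¹, hA.mul_val_inv, hA.val_inv_mul⟩
  obtain ⟨B', hBB', hB'B⟩ : ∃ B' : Matrix (Fin n) (Fin n) ℝ, B * B' = 1 ∧ B' * B = 1 := by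
    exact ⟨↑hB.unit⁻¹, hB.mul_val_inv, hB.val_inv_mul⟩
  have hC0 : (0:ℝ) ≤ C := le_trans hc.le hcC
  -- Upper bound
  have hupperM : ∀ v : Fin n → ℝ, euclNorm ((A * B').mulVec v) ≤ C * euclNorm v := by
    intro v
    have h1 : (A * B').mulVec v = A.mulVec (B'.mulVec v) := (Matrix.mulVec_mulVec _ _ _).symm
    have h2 : B.mulVec (B'.mulVec v) = v := by
      rw [Matrix.mulVec_mulVec, hBB', Matrix.one_mulVec]
    have := (hequiv (B'.mulVec v)).2
    rw [h2] at this
    rw [h1]; exact this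
  have hlowerM : ∀ v : Fin n → ℝ, euclNorm ((B * A').mulVec v) ≤ c⁻¹ * euclNorm v := by
    intro v
    have h1 : (B * A').mulVec v = B.mulVec (A'.mulVec v) := (Matrix.mulVec_mulVec _ _ _).symm
    have h2 : A.mulVec (A'.mulVec v) = v := by
      rw [Matrix.mulVec_mulVec, hAA', Matrix.one_mulVec]
    have := (hequiv (A'.mulVec v)).1
    rw [h2] at this
    rw [h1]
    rw [inv_mul_eq_div, le_div_iff₀ hc, mul_comm]
    exact this
  -- relate kronPow A and kronPow B
  have hfac : kronPow n d A = kronPow n d (A * B') * kronPow n d B := by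
    rw [← kronPow_mul, Matrix.mul_assoc, hB'B, Matrix.mul_one]
  have hfac' : kronPow n d B = kronPow n d (B * A') * kronPow n d A := by
    rw [← kronPow_mul, Matrix.mul_assoc, hA'A, Matrix.mul_one]
  constructor
  · -- lower
    have := norm_bound n d (B * A') c⁻¹ (inv_nonneg.mpr hc.le) hlowerM
      ((kronPow n d A).mulVec u)
    rw [Matrix.mulVec_mulVec, ← hfac'] at this
    have h3 := mul_le_mul_of_nonneg_left this (pow_nonneg hc.le d)
    calc c ^ d * euclNorm ((kronPow n d B).mulVec u)
        ≤ c ^ d * (c⁻¹ ^ d * euclNorm ((kronPow n d A).mulVec u)) := h3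
      _ = euclNorm ((kronPow n d A).mulVec u) := by
          rw [← mul_assoc, ← mul_pow, mul_inv_cancel₀ hc.ne', one_pow, one_mul]
  · have := norm_bound n d (A * B') C hC0 hupperM ((kronPow n d B).mulVec u)
    rw [Matrix.mulVec_mulVec, ← hfac] at this
    exact this
end
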